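/- The commutative ring k[x, y, z]/⟨xy − z³⟩ is isomorphic to the subring of k⟨u,v⟩/⟨u²−v²⟩ generated by (uv)³, (vu)³, and u⁴, via x ↦ (uv)³, y ↦ (vu)³, z ↦ u⁴; in particular, in k⟨u,v⟩/⟨u²−v²⟩ the elements (uv)³, (vu)³, u⁴ pairwise commute and satisfy (uv)³(vu)³ = (u⁴)³. -/

import Mathlib

/-!
Since `u² = v²`, both `(uv)(vu)` and `(vu)(uv)` equal `u⁴`; hence `uv` and `vu` commute, the
three elements generate a commutative subalgebra, and `xy - z³` lies in the kernel of
`x ↦ (uv)³, y ↦ (vu)³, z ↦ u⁴`. For the converse, represent `A` on `k[s,t]²` by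
`u ↦ [[0, s], [t, 0]]`, `v ↦ [[0, t], [s, 0]]`: then `(uv)³, (vu)³, u⁴` become diagonal with
top-left entries `s⁶, t⁶, s²t²`. Modulo `xy - z³` every polynomial has a representative of
`z`-degree `< 3`, and on those the monomial map `xᵃ yᵇ zᶜ ↦ s^(6a+2c) t^(6b+2c)` is injective.
-/

noncomputable section

/-- The relation imposing `u² = v²` on the free algebra `k⟨u, v⟩`. -/
def uvRel (k : Type*) [Field k] :
    FreeAlgebra k (Fin 2) → FreeAlgebra k (Fin 2) → Prop :=
  fun p q => p = FreeAlgebra.ι k 0 * FreeAlgebra.ι k 0 ∧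
    q = FreeAlgebra.ι k 1 * FreeAlgebra.ι k 1

open MvPolynomial

section MonomialMap
open Finsupp
variable {R σ τ : Type*} [CommSemiring R]

theorem aeval_monomial_one_eq_mapDomainAlgHom (w : σ → τ →₀ ℕ) :
    aeval (fun i => monomial (w i) (1 : R)) =
      AddMonoidAlgebra.mapDomainAlgHom R R (linearCombination ℕ w).toAddMonoidHom := by
  refine algHom_ext fun i => ?_
  rw [aeval_X]
  simp [MvPolynomial, X, monomial]

theorem injOn_aeval_monomial_one {w : σ → τ →₀ ℕ} {S : Set (σ →₀ ℕ)}
    (hS : S.InjOn (linearCombination ℕ w)) :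
    Set.InjOn (aeval fun i => monomial (w i) (1 : R))
      (restrictSupport R S : Set (MvPolynomial σ R)) := by
  rw [aeval_monomial_one_eq_mapDomainAlgHom]
  intro p hp q hq hpq
  exact AddMonoidAlgebra.coeff_injective
    (mapDomain_injOn S hS hp hq (by simpa using congrArg AddMonoidAlgebra.coeff hpq))

end MonomialMap

section KernelOfMonomialMap
open Finsupp
variable {R : Type*} [CommRing R]

theorem exists_mem_restrictSupport_sub_mem_span (p : MvPolynomial (Fin 3) R) :
    ∃ r ∈ restrictSupport R {e : Fin 3 →₀ ℕ | e 2 < 3},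
      p - r ∈ Ideal.span {(X 0 * X 1 - X 2 ^ 3 : MvPolynomial (Fin 3) R)} := by
  induction p using MvPolynomial.induction_on' with
  | monomial e a =>
    set q := e 2 / 3
    set e₀ := e - single 2 (3 * q)
    have he : e = e₀ + single 2 (3 * q) :=
      (tsub_add_cancel_of_le (single_le_iff.2 (Nat.mul_div_le (e 2) 3))).symm
    refine ⟨monomial (e₀ + (single 0 q + single 1 q)) a, ?_, ?_⟩
    · simp only [monomial_mem_restrictSupport]
      left
      have : (e₀ + (single 0 q + single 1 q) : Fin 3 →₀ ℕ) 2 = e 2 - 3 * q := by simp [e₀]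
      show _ < 3
      omega
    · have hdiff : monomial e a - monomial (e₀ + (single 0 q + single 1 q)) a
          = monomial e₀ a * ((X 2 ^ 3) ^ q - (X 0 * X 1) ^ q) := by
        rw [mul_sub, he, ← pow_mul, mul_pow]
        simp only [X_pow_eq_monomial, monomial_mul, mul_one]
      rw [hdiff, Ideal.mem_span_singleton]
      exact dvd_mul_of_dvd_right (dvd_sub_comm.1 (sub_dvd_pow_sub_pow _ _ q)) _
  | add p₁ p₂ h₁ h₂ =>
    obtain ⟨r₁, hr₁, hpr₁⟩ := h₁
    obtain ⟨r₂, hr₂, hpr₂⟩ := h₂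
    refine ⟨r₁ + r₂, add_mem hr₁ hr₂, ?_⟩
    convert add_mem hpr₁ hpr₂ using 1
    ring

theorem ker_aeval_eq_span_X_mul_X_sub_X_pow_three :
    RingHom.ker (aeval ![X 0 ^ 6, X 1 ^ 6, X 0 ^ 2 * X 1 ^ 2] :
        MvPolynomial (Fin 3) R →ₐ[R] MvPolynomial (Fin 2) R) =
      Ideal.span {X 0 * X 1 - X 2 ^ 3} := by
  set ψ : MvPolynomial (Fin 3) R →ₐ[R] MvPolynomial (Fin 2) R :=
    aeval ![X 0 ^ 6, X 1 ^ 6, X 0 ^ 2 * X 1 ^ 2]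
  set w : Fin 3 → Fin 2 →₀ ℕ := ![single 0 6, single 1 6, single 0 2 + single 1 2]
  have hψ : ψ = aeval fun i => monomial (w i) 1 := by
    refine congrArg aeval (funext fun i => ?_)
    fin_cases i <;> simp [w, X_pow_eq_monomial, monomial_mul]
  have hw : Set.InjOn (linearCombination ℕ w) {e | e 2 < 3} := by
    intro e (he : e 2 < 3) e' (he' : e' 2 < 3) h
    have h0 : e 0 * 6 + e 2 * 2 = e' 0 * 6 + e' 2 * 2 := by
      simpa [w, linearCombination_apply, sum_fintype, Fin.sum_univ_three] using
        DFunLike.congr_fun h 0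
    have h1 : e 1 * 6 + e 2 * 2 = e' 1 * 6 + e' 2 * 2 := by
      simpa [w, linearCombination_apply, sum_fintype, Fin.sum_univ_three] using
        DFunLike.congr_fun h 1
    ext i
    fin_cases i
    exacts [(by omega : e 0 = e' 0), (by omega : e 1 = e' 1), (by omega : e 2 = e' 2)]
  have hrel : Ideal.span {X 0 * X 1 - X 2 ^ 3} ≤ RingHom.ker ψ := by
    rw [Ideal.span_le, Set.singleton_subset_iff, SetLike.mem_coe, RingHom.mem_ker]
    simp [ψ, mul_pow, ← pow_mul]
  refine le_antisymm (fun p hp => ?_) hrel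
  obtain ⟨r, hr, hpr⟩ := exists_mem_restrictSupport_sub_mem_span p
  have hψr : ψ r = 0 := by simpa [RingHom.mem_ker.1 hp] using hrel hpr
  have hr0 : r = 0 := by
    rw [hψ] at hψr
    exact injOn_aeval_monomial_one hw hr (zero_mem _) (by rw [hψr, map_zero])
  simpa [hr0] using hpr

end KernelOfMonomialMap

section CommutingEval
variable {R A σ : Type*} [CommSemiring R] [Semiring A] [Algebra R A]

open scoped IsMulCommutative in
def aevalOfCommute (a : σ → A) (ha : ∀ i j, Commute (a i) (a j)) :
    MvPolynomial σ R →ₐ[R] A :=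
  haveI := Algebra.isMulCommutative_adjoin R (s := Set.range a) <| by
    rintro _ ⟨i, rfl⟩ _ ⟨j, rfl⟩
    exact ha i j
  (Algebra.adjoin R (Set.range a)).val.comp
    (aeval fun i => ⟨a i, Algebra.subset_adjoin (Set.mem_range_self i)⟩)

variable (a : σ → A) (ha : ∀ i j, Commute (a i) (a j))

@[simp]
theorem aevalOfCommute_X (i : σ) : aevalOfCommute (R := R) a ha (X i) = a i := by
  simp [aevalOfCommute]

theorem range_aevalOfCommute :
    (aevalOfCommute (R := R) a ha).range = Algebra.adjoin R (Set.range a) := by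
  rw [← Algebra.map_top, ← adjoin_range_X, AlgHom.map_adjoin, ← Set.range_comp]
  congr 2
  funext i
  simp

end CommutingEval

theorem exists_quotient_algEquiv_adjoin {R A σ : Type*} [CommRing R] [Semiring A] [Algebra R A]
    {a : σ → A} (ha : ∀ i j, Commute (a i) (a j)) {I : Ideal (MvPolynomial σ R)}
    (hI : RingHom.ker (aevalOfCommute a ha) = I) :
    ∃ f : (MvPolynomial σ R ⧸ I) ≃ₐ[R] Algebra.adjoin R (Set.range a),
      ∀ i, (f (Ideal.Quotient.mk I (X i)) : A) = a i :=
  ⟨(Ideal.quotientEquivAlgOfEq R hI.symm).trans <| (Ideal.quotientKerEquivRange _).trans <|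
    Subalgebra.equivOfEq _ _ (range_aevalOfCommute a ha), fun i => aevalOfCommute_X a ha i⟩

open Matrix

section SquaresEqual
variable {M : Type*} [Monoid M] {u v : M}

theorem mul_mul_mul_swap_eq_pow_four (h : u * u = v * v) : u * v * (v * u) = u ^ 4 := by
  calc u * v * (v * u) = u * (v * v) * u := by simp only [mul_assoc]
    _ = u ^ 4 := by rw [← h]; simp only [pow_succ, pow_zero, one_mul, mul_assoc]

theorem commute_mul_mul_swap (h : u * u = v * v) : Commute (u * v) (v * u) := by
  have h' : v * u * (u * v) = u ^ 4 := by
    calc v * u * (u * v) = v * (u * u) * v := by simp only [mul_assoc]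
      _ = (v * v) * (v * v) := by rw [h]; simp only [mul_assoc]
      _ = u ^ 4 := by rw [← h]; simp only [pow_succ, pow_zero, one_mul, mul_assoc]
  exact (mul_mul_mul_swap_eq_pow_four h).trans h'.symm

theorem pairwise_commute_of_mul_self_eq (h : u * u = v * v) (i j : Fin 3) :
    Commute (![(u * v) ^ 3, (v * u) ^ 3, u ^ 4] i) (![(u * v) ^ 3, (v * u) ^ 3, u ^ 4] j) := by
  have hc := commute_mul_mul_swap h
  have h₀₁ : Commute ((u * v) ^ 3) ((v * u) ^ 3) := hc.pow_pow 3 3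
  have h₀₂ : Commute ((u * v) ^ 3) (u * v * (v * u)) :=
    ((Commute.refl _).mul_right hc).pow_left 3
  have h₁₂ : Commute ((v * u) ^ 3) (u * v * (v * u)) := (hc.symm.mul_right (.refl _)).pow_left 3
  rw [← mul_mul_mul_swap_eq_pow_four h]
  fin_cases i <;> fin_cases j <;> simp [h₀₁, h₀₂, h₁₂, h₀₁.symm, h₀₂.symm, h₁₂.symm]

theorem mul_swap_pow_three_eq (h : u * u = v * v) : (u * v) ^ 3 * (v * u) ^ 3 = (u ^ 4) ^ 3 := by
  rw [← mul_mul_mul_swap_eq_pow_four h, (commute_mul_mul_swap h).mul_pow]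

end SquaresEqual

section UVAlgebra
variable (k : Type*) [Field k]

abbrev uvGen (i : Fin 2) : RingQuot (uvRel k) :=
  RingQuot.mkAlgHom k (uvRel k) (FreeAlgebra.ι k i)

theorem uvGen_zero_mul_self : uvGen k 0 * uvGen k 0 = uvGen k 1 * uvGen k 1 := by
  simpa only [map_mul] using RingQuot.mkAlgHom_rel k (s := uvRel k) ⟨rfl, rfl⟩

variable {k} {B : Type*} [Semiring B] [Algebra k B]

def uvLift (U V : B) (h : U * U = V * V) : RingQuot (uvRel k) →ₐ[k] B :=
  RingQuot.liftAlgHom k ⟨FreeAlgebra.lift k ![U, V], by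
    rintro _ _ ⟨rfl, rfl⟩
    simpa [map_mul, FreeAlgebra.lift_ι_apply] using h⟩

@[simp]
theorem uvLift_uvGen (U V : B) (h : U * U = V * V) (i : Fin 2) :
    uvLift U V h (uvGen k i) = ![U, V] i := by
  simp [uvLift, RingQuot.liftAlgHom_mkAlgHom_apply]

end UVAlgebra

section DiagonalRep
variable (R : Type*) [CommSemiring R]

def uMat : Matrix (Fin 2) (Fin 2) (MvPolynomial (Fin 2) R) := !![0, X 0; X 1, 0]
def vMat : Matrix (Fin 2) (Fin 2) (MvPolynomial (Fin 2) R) := !![0, X 1; X 0, 0]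

theorem uMat_mul_uMat : uMat R * uMat R = diagonal ![X 0 * X 1, X 0 * X 1] := by
  ext i j; fin_cases i <;> fin_cases j <;> simp [uMat, mul_comm]

theorem vMat_mul_vMat : vMat R * vMat R = diagonal ![X 0 * X 1, X 0 * X 1] := by
  ext i j; fin_cases i <;> fin_cases j <;> simp [vMat, mul_comm]

theorem uMat_mul_vMat : uMat R * vMat R = diagonal ![X 0 ^ 2, X 1 ^ 2] := by
  ext i j; fin_cases i <;> fin_cases j <;> simp [uMat, vMat, sq]

theorem vMat_mul_uMat : vMat R * uMat R = diagonal ![X 1 ^ 2, X 0 ^ 2] := by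
  ext i j; fin_cases i <;> fin_cases j <;> simp [uMat, vMat, sq]

theorem uMat_pow_four : uMat R ^ 4 = diagonal ![X 0 ^ 2 * X 1 ^ 2, X 0 ^ 2 * X 1 ^ 2] := by
  rw [show 4 = 2 * 2 from rfl, pow_mul, sq (uMat R), uMat_mul_uMat, diagonal_pow]
  simp [mul_pow]

end DiagonalRep

theorem MvPolynomial.algHom_apply_eq_diagonal_aeval {R S σ n : Type*} [CommSemiring R]
    [CommSemiring S] [Algebra R S] [Fintype n] [DecidableEq n]
    (Φ : MvPolynomial σ R →ₐ[R] Matrix n n S) (d : n → σ → S)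
    (h : ∀ i, Φ (X i) = diagonal fun j => d j i) (p : MvPolynomial σ R) :
    Φ p = diagonal fun j => aeval (d j) p := by
  have : Φ = (diagonalAlgHom R).comp (AlgHom.pi fun j => aeval (d j)) :=
    algHom_ext fun i => by simp [h]
  rw [this]
  rfl

theorem ker_aevalOfCommute_uvPowers (k : Type*) [Field k] :
    RingHom.ker (aevalOfCommute (R := k) _
        (pairwise_commute_of_mul_self_eq (uvGen_zero_mul_self k))) =
      Ideal.span {X 0 * X 1 - X 2 ^ 3} := by
  set F := aevalOfCommute (R := k) _ (pairwise_commute_of_mul_self_eq (uvGen_zero_mul_self k))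
  refine le_antisymm (fun p hp => ?_) ?_
  · let Φ := (uvLift (uMat k) (vMat k) (by rw [uMat_mul_uMat, vMat_mul_vMat])).comp F
    have hΦ : ∀ i, Φ (X i) = diagonal fun j => ![![X 0 ^ 6, X 1 ^ 6, X 0 ^ 2 * X 1 ^ 2],
        ![X 1 ^ 6, X 0 ^ 6, X 0 ^ 2 * X 1 ^ 2]] j i := by
      intro i
      fin_cases i <;>
        simp [Φ, F, uMat_mul_vMat, vMat_mul_uMat, uMat_pow_four, diagonal_pow, ← pow_mul]
    have h00 := congrFun (congrFun (algHom_apply_eq_diagonal_aeval Φ _ hΦ p) 0) 0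
    have hΦp : Φ p = 0 := by simp [Φ, RingHom.mem_ker.1 hp]
    rw [hΦp, Matrix.zero_apply, diagonal_apply_eq] at h00
    rw [← ker_aeval_eq_span_X_mul_X_sub_X_pow_three (R := k), RingHom.mem_ker]
    exact h00.symm
  · rw [Ideal.span_le, Set.singleton_subset_iff, SetLike.mem_coe, RingHom.mem_ker]
    simp [F, mul_swap_pow_three_eq (uvGen_zero_mul_self k)]

theorem stmt_19_general (k : Type*) [Field k] :
    let A := RingQuot (uvRel k)
    let u : A := RingQuot.mkAlgHom k (uvRel k) (FreeAlgebra.ι k 0)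
    let v : A := RingQuot.mkAlgHom k (uvRel k) (FreeAlgebra.ι k 1)
    Commute ((u * v) ^ 3) ((v * u) ^ 3) ∧
    Commute ((u * v) ^ 3) (u ^ 4) ∧
    Commute ((v * u) ^ 3) (u ^ 4) ∧
    (u * v) ^ 3 * (v * u) ^ 3 = (u ^ 4) ^ 3 ∧
    ∃ f : (MvPolynomial (Fin 3) k ⧸
            Ideal.span {MvPolynomial.X 0 * MvPolynomial.X 1 - MvPolynomial.X 2 ^ 3}) ≃ₐ[k]
          Algebra.adjoin k ({(u * v) ^ 3, (v * u) ^ 3, u ^ 4} : Set A),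
      ((f (Ideal.Quotient.mk _ (MvPolynomial.X 0)) : A) = (u * v) ^ 3 ∧
       (f (Ideal.Quotient.mk _ (MvPolynomial.X 1)) : A) = (v * u) ^ 3 ∧
       (f (Ideal.Quotient.mk _ (MvPolynomial.X 2)) : A) = u ^ 4) := by
  intro A u v
  have huv : u * u = v * v := uvGen_zero_mul_self k
  have hcomm := pairwise_commute_of_mul_self_eq huv
  refine ⟨hcomm 0 1, hcomm 0 2, hcomm 1 2, mul_swap_pow_three_eq huv, ?_⟩
  have hrange : ({(u * v) ^ 3, (v * u) ^ 3, u ^ 4} : Set A) =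
      Set.range ![(u * v) ^ 3, (v * u) ^ 3, u ^ 4] := by
    simp only [Matrix.range_cons, Matrix.range_empty, Set.union_empty, Set.singleton_union]
  rw [hrange]
  obtain ⟨f, hf⟩ := exists_quotient_algEquiv_adjoin hcomm (ker_aevalOfCommute_uvPowers k)
  exact ⟨f, hf 0, hf 1, hf 2⟩

/-- In `A = k⟨u,v⟩/⟨u² - v²⟩`, the elements `(uv)³`, `(vu)³`, `u⁴` pairwise
commute and satisfy `(uv)³(vu)³ = (u⁴)³`, and `k[x,y,z]/⟨xy - z³⟩` is
isomorphic to the subalgebra of `A` they generate, via `x ↦ (uv)³`,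
`y ↦ (vu)³`, `z ↦ u⁴`. -/
theorem stmt_19 (k : Type*) [Field k] [IsAlgClosed k] [CharZero k] :
    let A := RingQuot (uvRel k)
    let u : A := RingQuot.mkAlgHom k (uvRel k) (FreeAlgebra.ι k 0)
    let v : A := RingQuot.mkAlgHom k (uvRel k) (FreeAlgebra.ι k 1)
    Commute ((u * v) ^ 3) ((v * u) ^ 3) ∧
    Commute ((u * v) ^ 3) (u ^ 4) ∧
    Commute ((v * u) ^ 3) (u ^ 4) ∧
    (u * v) ^ 3 * (v * u) ^ 3 = (u ^ 4) ^ 3 ∧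
    ∃ f : (MvPolynomial (Fin 3) k ⧸
            Ideal.span {MvPolynomial.X 0 * MvPolynomial.X 1 - MvPolynomial.X 2 ^ 3}) ≃ₐ[k]
          Algebra.adjoin k ({(u * v) ^ 3, (v * u) ^ 3, u ^ 4} : Set A),
      ((f (Ideal.Quotient.mk _ (MvPolynomial.X 0)) : A) = (u * v) ^ 3 ∧
       (f (Ideal.Quotient.mk _ (MvPolynomial.X 1)) : A) = (v * u) ^ 3 ∧
       (f (Ideal.Quotient.mk _ (MvPolynomial.X 2)) : A) = u ^ 4) :=
  stmt_19_general k
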